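/- arXiv:1309.5070 — 5 statements merged into one kernel-verified Lean document; each statement's English description precedes it below -/
import Mathlib

section
/- Let (φ_k)_{k≥0} denote the Hermite functions on ℝ, i.e. the L²-normalized eigenfunctions of the harmonic oscillator satisfying −φ_k''(p) + p²φ_k(p) = (2k+1)φ_k(p). For every integer n ≥ 1 and ν = ±(2n)^{−1/2}, the shifted Hermite function e(p) = φ_{n−1}(p − 1/ν) satisfies the eigenvalue equation p·e(p) = ν·( (1/2)(−e''(p) + p² e(p)) + (1/2) e(p) ) for all p ∈ ℝ. In other words, e is an eigenvector of the operator (1/2 + 𝒪)^{-1} p with eigenvalue ν, where 𝒪 = (−d²/dp² + p²)/2. -/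
open MeasureTheory

/-- Shifted Hermite functions as eigenvectors of `(1/2 + 𝒪)⁻¹ p`:
if `φ k` are the normalized Hermite functions (eigenfunctions of the harmonic
oscillator, `-φ_k'' + p² φ_k = (2k+1) φ_k`), `n ≥ 1` and `ν = ±(2n)^{-1/2}`, then
`e(p) = φ_{n-1}(p - 1/ν)` satisfies `p e(p) = ν ((1/2)(-e'' + p² e) + (1/2) e)`. -/
theorem shifted_hermite_eigenvector
    (φ : ℕ → ℝ → ℝ)
    (hsmooth : ∀ k, ContDiff ℝ (⊤ : ℕ∞) (φ k))
    (hnorm : ∀ k, ∫ p : ℝ, (φ k p) ^ 2 = 1)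
    (heig : ∀ (k : ℕ) (p : ℝ),
      -(deriv (deriv (φ k)) p) + p ^ 2 * φ k p = (2 * (k : ℝ) + 1) * φ k p)
    (n : ℕ) (hn : 1 ≤ n) (ν : ℝ)
    (hν : ν = (2 * (n : ℝ)) ^ (-(1/2 : ℝ)) ∨ ν = -((2 * (n : ℝ)) ^ (-(1/2 : ℝ))))
    (e : ℝ → ℝ) (he : e = fun p => φ (n - 1) (p - 1/ν)) :
    ∀ p : ℝ, p * e p
      = ν * ((1/2) * (-(deriv (deriv e) p) + p ^ 2 * e p) + (1/2) * e p) := by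
  intro p
  subst he
  have hnpos : (0:ℝ) < (n:ℝ) := by exact_mod_cast hn
  have ha : (0:ℝ) < 2 * (n:ℝ) := by linarith
  have hpow : (0:ℝ) < (2*(n:ℝ)) ^ (-(1/2:ℝ)) := Real.rpow_pos_of_pos ha _
  have hν0 : ν ≠ 0 := by
    rcases hν with h|h <;> subst h
    · exact ne_of_gt hpow
    · exact ne_of_lt (by linarith)
  have hsq : ((2*(n:ℝ)) ^ (-(1/2:ℝ))) ^ 2 = (2*(n:ℝ))⁻¹ := by
    rw [← Real.rpow_natCast ((2*(n:ℝ)) ^ (-(1/2:ℝ))) 2, ← Real.rpow_mul ha.le,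
      show (-(1/2:ℝ)) * ((2:ℕ):ℝ) = -1 by push_cast; ring, Real.rpow_neg_one]
  have hν2 : ν ^ 2 = (2*(n:ℝ))⁻¹ := by
    rcases hν with h|h <;> subst h <;> simpa [neg_pow] using hsq
  have hc2 : (1/ν)^2 = 2*(n:ℝ) := by
    rw [div_pow, one_pow, hν2, one_div, inv_inv]
  have hνc : ν * (1/ν) = 1 := by field_simp
  have hkn : ((n-1 : ℕ) : ℝ) = (n:ℝ) - 1 := by
    rw [Nat.cast_sub hn]; simp
  have hd1 : deriv (fun q => φ (n-1) (q - 1/ν)) = fun q => deriv (φ (n-1)) (q - 1/ν) := by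
    funext q
    exact deriv_comp_sub_const _ _ _
  have hd2 : deriv (deriv (fun q => φ (n-1) (q - 1/ν))) p
      = deriv (deriv (φ (n-1))) (p - 1/ν) := by
    rw [hd1]
    exact deriv_comp_sub_const _ _ _
  have hD : deriv (deriv (φ (n-1))) (p - 1/ν)
      = (p - 1/ν)^2 * φ (n-1) (p - 1/ν) - (2*((n-1:ℕ):ℝ)+1) * φ (n-1) (p - 1/ν) := by
    have := heig (n-1) (p - 1/ν)
    linarith
  simp only [hd2, hD, hkn]
  set A := φ (n-1) (p - 1/ν)
  linear_combination (-(p*A)) * hνc + (ν*A/2) * hc2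
end

section
/- Let 𝒟 be a complex Hilbert space carrying two inner products ⟨·,·⟩₁ and ⟨·,·⟩₂ related by ⟨u, M u'⟩₁ = ⟨u, u'⟩₂ for all u, u' ∈ 𝒟, where M is a bounded, positive, invertible operator with respect to ⟨·,·⟩₁. Then a densely defined operator (A, D(A)) is maximal accretive in (𝒟, ⟨·,·⟩₂) if and only if (MA, D(A)) is maximal accretive in (𝒟, ⟨·,·⟩₁). -/
/-!
Accretivity of `A` for `⟨·,·⟩₂` is accretivity of `MA` for `⟨·,·⟩₁`, and `1 + A` is bijective
iff `M(1 + A) = M + MA` is. Since `M ≥ ε > 0`, every operator `B + MA` with `B` on the segment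
from `1` to `M` is coercive with one common constant `c`. A coercive operator that is onto has a
bounded inverse of norm `≤ 1/c`, so it stays onto under bounded perturbations of norm `< c`
(Neumann series); walking from `1` to `M` in finitely many such steps transports surjectivity.
-/

open ContinuousLinearMap RCLike

theorem LinearMap.injective_of_mul_norm_le {𝕜 E F : Type*} [NormedField 𝕜]
    [NormedAddCommGroup E] [NormedSpace 𝕜 E] [NormedAddCommGroup F] [NormedSpace 𝕜 F]
    {T : E →ₗ[𝕜] F} {c : ℝ} (hc : 0 < c) (hT : ∀ u, c * ‖u‖ ≤ ‖T u‖) :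
    Function.Injective T := by
  refine (injective_iff_map_eq_zero T).mpr fun u hu => ?_
  have := hT u
  rw [hu, norm_zero] at this
  exact norm_le_zero_iff.mp (nonpos_of_mul_nonpos_right this hc)

theorem ContinuousLinearMap.IsPositive.exists_pos_mul_norm_sq_le_re_inner {H : Type*}
    [NormedAddCommGroup H] [InnerProductSpace ℂ H] [CompleteSpace H] {M : H →L[ℂ] H}
    (hMpos : M.IsPositive) (hMinv : IsUnit M) :
    ∃ ε : ℝ, 0 < ε ∧ ∀ x : H, ε * ‖x‖ ^ 2 ≤ (inner ℂ x (M x)).re := by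
  rcases subsingleton_or_nontrivial H with _ | _
  · exact ⟨1, one_pos, fun x => by simp [Subsingleton.elim x 0]⟩
  have hM : IsStrictlyPositive M :=
    IsStrictlyPositive.iff_of_unital.mpr ⟨(nonneg_iff_isPositive M).mpr hMpos, hMinv⟩
  obtain ⟨ε, hε, hεM⟩ := (CFC.exists_pos_algebraMap_le_iff hM.isSelfAdjoint).mpr
    fun _ hx => hM.spectrum_pos hx
  refine ⟨ε, hε, fun x => ?_⟩
  have h := ((le_def _ _).mp hεM).re_inner_nonneg_right x
  rw [sub_apply, Algebra.algebraMap_eq_smul_one, smul_apply, one_apply_eq_self, inner_sub_right,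
    ← Complex.coe_smul, inner_smul_right, re_to_complex, Complex.sub_re,
    Complex.re_ofReal_mul] at h
  simp only [← re_to_complex, inner_self_eq_norm_sq] at h ⊢
  linarith

section Coercive

variable {𝕜 H : Type*} [RCLike 𝕜] [NormedAddCommGroup H] [InnerProductSpace 𝕜 H]

local notation "⟪" x ", " y "⟫" => inner 𝕜 x y

theorem mul_norm_le_norm_of_mul_norm_sq_le_re_inner {c : ℝ} {x y : H}
    (h : c * ‖x‖ ^ 2 ≤ re ⟪x, y⟫) : c * ‖x‖ ≤ ‖y‖ := by
  rcases (norm_nonneg x).eq_or_lt with hx | hx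
  · simp [← hx]
  · refine le_of_mul_le_mul_right ?_ hx
    calc c * ‖x‖ * ‖x‖ = c * ‖x‖ ^ 2 := by ring
      _ ≤ re ⟪x, y⟫ := h
      _ ≤ ‖x‖ * ‖y‖ := re_inner_le_norm x y
      _ = ‖y‖ * ‖x‖ := mul_comm _ _

variable {D : Submodule 𝕜 H} {S : D →ₗ[𝕜] H} {B C : H →L[𝕜] H} {c : ℝ}

theorem mul_norm_sq_le_re_inner_segment
    (hB : ∀ u : D, c * ‖(u : H)‖ ^ 2 ≤ re ⟪(u : H), B u + S u⟫)
    (hC : ∀ u : D, c * ‖(u : H)‖ ^ 2 ≤ re ⟪(u : H), C u + S u⟫)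
    {t : ℝ} (ht₀ : 0 ≤ t) (ht₁ : t ≤ 1) (u : D) :
    c * ‖(u : H)‖ ^ 2 ≤ re ⟪(u : H), (B + (t : 𝕜) • (C - B)) u + S u⟫ := by
  have hcomb : (B + (t : 𝕜) • (C - B)) u + S u
      = ((1 - t : ℝ) : 𝕜) • (B u + S u) + (t : 𝕜) • (C u + S u) := by
    simp only [add_apply, smul_apply, sub_apply, ofReal_sub, ofReal_one]
    module
  rw [hcomb, inner_add_right, inner_smul_right, inner_smul_right, map_add, re_ofReal_mul,
    re_ofReal_mul]
  nlinarith [mul_le_mul_of_nonneg_left (hB u) (sub_nonneg.mpr ht₁),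
    mul_le_mul_of_nonneg_left (hC u) ht₀]

variable [CompleteSpace H]

theorem LinearMap.surjective_add_comp_subtype_of_norm_lt {T : D →ₗ[𝕜] H} (hc : 0 < c)
    (hT : ∀ u : D, c * ‖(u : H)‖ ≤ ‖T u‖) (hsurj : Function.Surjective T)
    {P : H →L[𝕜] H} (hP : ‖P‖ < c) :
    Function.Surjective (T + (P : H →ₗ[𝕜] H) ∘ₗ D.subtype) := by
  let e := LinearEquiv.ofBijective T ⟨T.injective_of_mul_norm_le hc hT, hsurj⟩
  have he : ∀ f, T (e.symm f) = f := e.apply_symm_apply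
  let R : H →L[𝕜] H := (D.subtype ∘ₗ e.symm.toLinearMap).mkContinuous c⁻¹ fun f => by
    rw [le_inv_mul_iff₀ hc]
    simpa [he] using hT (e.symm f)
  have hPR : ‖-(P ∘L R)‖ < 1 :=
    calc ‖-(P ∘L R)‖ ≤ ‖P‖ * c⁻¹ := by
          rw [norm_neg]
          exact (opNorm_comp_le P R).trans
            (mul_le_mul_of_nonneg_left (LinearMap.mkContinuous_norm_le _ (by positivity) _)
              (norm_nonneg P))
      _ < 1 := by rwa [← div_eq_mul_inv, div_lt_one hc]
  intro f
  obtain ⟨g, hg⟩ := (isUnit_iff_bijective.mp (isUnit_one_sub_of_norm_lt_one hPR)).2 f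
  exact ⟨e.symm g, by simpa [he, R] using hg⟩

theorem surjective_add_of_coercive (hc : 0 < c)
    (hB : ∀ u : D, c * ‖(u : H)‖ ^ 2 ≤ re ⟪(u : H), B u + S u⟫)
    (hC : ∀ u : D, c * ‖(u : H)‖ ^ 2 ≤ re ⟪(u : H), C u + S u⟫)
    (hsurj : Function.Surjective fun u : D => B u + S u) :
    Function.Surjective fun u : D => C u + S u := by
  obtain ⟨N, hN⟩ := exists_nat_gt (‖C - B‖ / c)
  have hN₀ : (0 : ℝ) < N := (div_nonneg (norm_nonneg _) hc.le).trans_lt hN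
  let P : H →L[𝕜] H := (((N : ℝ)⁻¹ : ℝ) : 𝕜) • (C - B)
  have hP : ‖P‖ < c := by
    rw [norm_smul, norm_ofReal, abs_of_pos (inv_pos.mpr hN₀), inv_mul_lt_iff₀ hN₀]
    rwa [div_lt_iff₀ hc] at hN
  let Bk : ℕ → H →L[𝕜] H := fun k => B + ((k / N : ℝ) : 𝕜) • (C - B)
  have hstep : ∀ k, Bk (k + 1) = Bk k + P := fun k => by
    simp only [Bk, P]
    rw [Nat.cast_succ, add_div, one_div, ofReal_add, add_smul, add_assoc]
  have hBN : Bk N = C := by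
    simp only [Bk]
    rw [div_self hN₀.ne', ofReal_one, one_smul, add_sub_cancel]
  suffices ∀ k ≤ N, Function.Surjective fun u : D => Bk k u + S u by
    simpa [hBN] using this N le_rfl
  intro k
  induction k with
  | zero => simpa [Bk] using hsurj
  | succ k ih =>
    intro hk
    have hkN : (k : ℝ) / N ≤ 1 := (div_le_one hN₀).mpr (by exact_mod_cast k.le_succ.trans hk)
    have hcoer := mul_norm_sq_le_re_inner_segment hB hC (by positivity) hkN
    have := LinearMap.surjective_add_comp_subtype_of_norm_lt
      (T := (Bk k : H →ₗ[𝕜] H) ∘ₗ D.subtype + S) hc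
      (fun u => mul_norm_le_norm_of_mul_norm_sq_le_re_inner (hcoer u)) (ih (by omega)) hP
    convert this using 1
    ext u
    simp [hstep, add_right_comm]

theorem bijective_add_iff_of_coercive (hc : 0 < c)
    (hB : ∀ u : D, c * ‖(u : H)‖ ^ 2 ≤ re ⟪(u : H), B u + S u⟫)
    (hC : ∀ u : D, c * ‖(u : H)‖ ^ 2 ≤ re ⟪(u : H), C u + S u⟫) :
    Function.Bijective (fun u : D => B u + S u) ↔ Function.Bijective fun u : D => C u + S u :=
  ⟨fun h => ⟨LinearMap.injective_of_mul_norm_le (T := (C : H →ₗ[𝕜] H) ∘ₗ D.subtype + S) hc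
      fun u => mul_norm_le_norm_of_mul_norm_sq_le_re_inner (hC u),
    surjective_add_of_coercive hc hB hC h.2⟩,
  fun h => ⟨LinearMap.injective_of_mul_norm_le (T := (B : H →ₗ[𝕜] H) ∘ₗ D.subtype + S) hc
      fun u => mul_norm_le_norm_of_mul_norm_sq_le_re_inner (hB u),
    surjective_add_of_coercive hc hC hB h.2⟩⟩

end Coercive

theorem maximal_accretive_change_of_inner_product_general
    {H : Type*} [NormedAddCommGroup H] [InnerProductSpace ℂ H] [CompleteSpace H]
    (M : H →L[ℂ] H) (hMpos : M.IsPositive) (hMinv : IsUnit M)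
    (D : Submodule ℂ H) (A : D →ₗ[ℂ] H) :
    ((∀ u : D, 0 ≤ (inner ℂ (u : H) (M (A u)) : ℂ).re) ∧
        Function.Bijective fun u : D => (u : H) + A u)
      ↔ ((∀ u : D, 0 ≤ (inner ℂ (u : H) (M (A u)) : ℂ).re) ∧
        Function.Bijective fun u : D => (u : H) + M (A u)) := by
  refine and_congr_right fun hacc => ?_
  obtain ⟨ε, hε, hMε⟩ := hMpos.exists_pos_mul_norm_sq_le_re_inner hMinv
  have hc : 0 < min 1 ε := lt_min one_pos hε
  have hone : ∀ u : D, min 1 ε * ‖(u : H)‖ ^ 2 ≤ (inner ℂ (u : H) (u + M (A u))).re := by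
    intro u
    rw [inner_add_right, Complex.add_re, ← re_to_complex, inner_self_eq_norm_sq]
    nlinarith [min_le_left 1 ε, hacc u, sq_nonneg ‖(u : H)‖]
  have hM : ∀ u : D, min 1 ε * ‖(u : H)‖ ^ 2 ≤ (inner ℂ (u : H) (M u + M (A u))).re := by
    intro u
    rw [inner_add_right, Complex.add_re]
    nlinarith [min_le_right 1 ε, hacc u, hMε u, sq_nonneg ‖(u : H)‖]
  calc Function.Bijective (fun u : D => (u : H) + A u)
      ↔ Function.Bijective (fun u : D => M u + M (A u)) := by
        simpa [Function.comp_def] using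
          ((isUnit_iff_bijective.mp hMinv).of_comp_iff' fun u : D => (u : H) + A u).symm
    _ ↔ Function.Bijective (fun u : D => (u : H) + M (A u)) :=
        (bijective_add_iff_of_coercive (S := (M : H →ₗ[ℂ] H) ∘ₗ A) hc (B := 1) hone hM).symm

/-- Maximal accretivity under a change of inner product (Lemma on equivalent scalar
products): with `⟨u, u'⟩₂ = ⟨u, M u'⟩₁` for a bounded positive invertible `M`,
a densely defined operator `(A, D(A))` is maximal accretive for `⟨·,·⟩₂`
iff `(MA, D(A))` is maximal accretive for `⟨·,·⟩₁`.
Accretivity for `⟨·,·⟩₂` reads `0 ≤ Re ⟨u, M (A u)⟩₁`, and maximality is the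
bijectivity of `1 + A` (resp. `1 + MA`) from `D(A)` onto the space. -/
theorem maximal_accretive_change_of_inner_product
    {H : Type*} [NormedAddCommGroup H] [InnerProductSpace ℂ H] [CompleteSpace H]
    (M : H →L[ℂ] H) (hMpos : M.IsPositive) (hMinv : IsUnit M)
    (D : Submodule ℂ H) (hdense : Dense (D : Set H)) (A : D →ₗ[ℂ] H) :
    ((∀ u : D, 0 ≤ (inner ℂ (u : H) (M (A u)) : ℂ).re) ∧
        Function.Bijective fun u : D => (u : H) + A u)
      ↔ ((∀ u : D, 0 ≤ (inner ℂ (u : H) (M (A u)) : ℂ).re) ∧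
        Function.Bijective fun u : D => (u : H) + M (A u)) :=
  maximal_accretive_change_of_inner_product_general M hMpos hMinv D A
end

section
/- Let A be a bounded operator on a complex Hilbert space H satisfying Re⟨u, Au⟩ ≥ c‖u‖² for all u ∈ H, with some constant c > 0. Then 1 + A is boundedly invertible, and the Cayley-type transform (1−A)(1+A)^{-1} is a strict contraction with the explicit bound ‖(1−A)(1+A)^{-1}‖ ≤ (1 + 2c/(1 + ‖A‖²))^{−1/2} < 1. -/
/-!
Since `Re⟨u, (1 + A)u⟩ ≥ (1 + c)‖u‖²`, the operator `1 + A` is bounded below, hence injective with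
closed range, and a vector `v` orthogonal to its range has `Re⟨v, (1 + A)v⟩ = 0`, hence `v = 0`.
For the bound put `u = (1 + A)⁻¹ v`. Then `‖v‖² = ‖(1 + A)u‖² = ‖(1 - A)u‖² + 4 Re⟨u, Au⟩`, and
`‖(1 - A)u‖² ≤ (1 + ‖A‖²)‖u‖² ≤ (1 + ‖A‖²) Re⟨u, Au⟩ / c`, which gives
`(1 + 2c/(1 + ‖A‖²)) ‖(1 - A)u‖² ≤ ‖v‖²`.
-/

open RCLike

namespace ContinuousLinearMap

theorem opNorm_le_rpow_neg_half_of_mul_sq_le {𝕜 E F : Type*}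
    [NontriviallyNormedField 𝕜] [SeminormedAddCommGroup E] [SeminormedAddCommGroup F]
    [NormedSpace 𝕜 E] [NormedSpace 𝕜 F] (f : E →L[𝕜] F) {t : ℝ} (ht : 0 < t)
    (hf : ∀ v, t * ‖f v‖ ^ 2 ≤ ‖v‖ ^ 2) : ‖f‖ ≤ t ^ (-(1 / 2 : ℝ)) := by
  rw [Real.rpow_neg ht.le, ← Real.sqrt_eq_rpow]
  refine f.opNorm_le_bound (by positivity) fun v => ?_
  rw [le_inv_mul_iff₀ (Real.sqrt_pos.mpr ht)]
  calc √t * ‖f v‖ = √(t * ‖f v‖ ^ 2) := by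
        rw [Real.sqrt_mul ht.le, Real.sqrt_sq (norm_nonneg _)]
    _ ≤ √(‖v‖ ^ 2) := Real.sqrt_le_sqrt (hf v)
    _ = ‖v‖ := Real.sqrt_sq (norm_nonneg v)

section Coercive

variable {𝕜 H : Type*} [RCLike 𝕜] [NormedAddCommGroup H] [InnerProductSpace 𝕜 H]

theorem mul_norm_le_norm_apply_of_coercive {T : H →L[𝕜] H} {m : ℝ}
    (hT : ∀ u, m * ‖u‖ ^ 2 ≤ re (inner 𝕜 u (T u))) (u : H) : m * ‖u‖ ≤ ‖T u‖ := by
  rcases (norm_nonneg u).eq_or_lt with hu | hu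
  · simp [← hu]
  refine le_of_mul_le_mul_left ?_ hu
  calc ‖u‖ * (m * ‖u‖) = m * ‖u‖ ^ 2 := by ring
    _ ≤ re (inner 𝕜 u (T u)) := hT u
    _ ≤ ‖inner 𝕜 u (T u)‖ := re_le_norm _
    _ ≤ ‖u‖ * ‖T u‖ := norm_inner_le_norm u (T u)

theorem antilipschitz_of_coercive {T : H →L[𝕜] H} {m : ℝ} (hm : 0 < m)
    (hT : ∀ u, m * ‖u‖ ^ 2 ≤ re (inner 𝕜 u (T u))) : AntilipschitzWith m⁻¹.toNNReal T := by
  refine T.antilipschitz_of_bound fun u => ?_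
  rw [Real.coe_toNNReal _ (inv_nonneg.mpr hm.le), le_inv_mul_iff₀ hm]
  exact mul_norm_le_norm_apply_of_coercive hT u

theorem ker_eq_bot_of_coercive {T : H →L[𝕜] H} {m : ℝ} (hm : 0 < m)
    (hT : ∀ u, m * ‖u‖ ^ 2 ≤ re (inner 𝕜 u (T u))) : T.ker = ⊥ :=
  LinearMap.ker_eq_bot.mpr (antilipschitz_of_coercive hm hT).injective

theorem range_eq_top_of_coercive [CompleteSpace H] {T : H →L[𝕜] H} {m : ℝ} (hm : 0 < m)
    (hT : ∀ u, m * ‖u‖ ^ 2 ≤ re (inner 𝕜 u (T u))) : T.range = ⊤ := by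
  have : CompleteSpace T.range :=
    ((antilipschitz_of_coercive hm hT).isClosed_range T.uniformContinuous).completeSpace_coe
  rw [← Submodule.orthogonal_eq_bot_iff, Submodule.eq_bot_iff]
  intro v hv
  have hTv : inner 𝕜 v (T v) = 0 := inner_eq_zero_symm.mp (hv (T v) ⟨v, rfl⟩)
  have : m * ‖v‖ ^ 2 ≤ 0 := by simpa [hTv] using hT v
  simpa using (pow_eq_zero_iff two_ne_zero).mp
    (le_antisymm (nonpos_of_mul_nonpos_right this hm) (sq_nonneg _))

noncomputable def equivOfCoercive [CompleteSpace H] (T : H →L[𝕜] H) {m : ℝ} (hm : 0 < m)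
    (hT : ∀ u, m * ‖u‖ ^ 2 ≤ re (inner 𝕜 u (T u))) : H ≃L[𝕜] H :=
  ContinuousLinearEquiv.ofBijective T (ker_eq_bot_of_coercive hm hT)
    (range_eq_top_of_coercive hm hT)

@[simp]
theorem coe_equivOfCoercive [CompleteSpace H] (T : H →L[𝕜] H) {m : ℝ} (hm : 0 < m)
    (hT : ∀ u, m * ‖u‖ ^ 2 ≤ re (inner 𝕜 u (T u))) :
    (equivOfCoercive T hm hT : H →L[𝕜] H) = T :=
  ContinuousLinearEquiv.coe_ofBijective _ _ _

theorem one_add_coercive {A : H →L[𝕜] H} {c : ℝ}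
    (hA : ∀ u, c * ‖u‖ ^ 2 ≤ re (inner 𝕜 u (A u))) (u : H) :
    (1 + c) * ‖u‖ ^ 2 ≤ re (inner 𝕜 u ((1 + A) u)) := by
  have := hA u
  rw [add_apply, one_apply_eq_self, inner_add_right, map_add, inner_self_eq_norm_sq]
  linarith

theorem norm_sub_apply_sq_le (A : H →L[𝕜] H) {u : H} (hu : 0 ≤ re (inner 𝕜 u (A u))) :
    ‖u - A u‖ ^ 2 ≤ (1 + ‖A‖ ^ 2) * ‖u‖ ^ 2 := by
  have hAu : ‖A u‖ ^ 2 ≤ ‖A‖ ^ 2 * ‖u‖ ^ 2 := by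
    rw [← mul_pow]; exact pow_le_pow_left₀ (norm_nonneg _) (A.le_opNorm u) 2
  rw [@norm_sub_sq 𝕜]
  linarith

theorem cayley_norm_sq_le {A : H →L[𝕜] H} {c : ℝ} (hc : 0 ≤ c)
    (hA : ∀ u, c * ‖u‖ ^ 2 ≤ re (inner 𝕜 u (A u))) (u : H) :
    (1 + 2 * c / (1 + ‖A‖ ^ 2)) * ‖u - A u‖ ^ 2 ≤ ‖u + A u‖ ^ 2 := by
  have hre := hA u
  have hu : 0 ≤ c * ‖u‖ ^ 2 := by positivity
  have hM : 0 < 1 + ‖A‖ ^ 2 := by positivity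
  have hsub : 2 * c / (1 + ‖A‖ ^ 2) * ‖u - A u‖ ^ 2 ≤ 2 * c * ‖u‖ ^ 2 :=
    calc 2 * c / (1 + ‖A‖ ^ 2) * ‖u - A u‖ ^ 2
        ≤ 2 * c / (1 + ‖A‖ ^ 2) * ((1 + ‖A‖ ^ 2) * ‖u‖ ^ 2) := by
          gcongr; exact A.norm_sub_apply_sq_le (hu.trans hre)
      _ = 2 * c * ‖u‖ ^ 2 := by field_simp
  have hpar : ‖u + A u‖ ^ 2 = ‖u - A u‖ ^ 2 + 4 * re (inner 𝕜 u (A u)) := by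
    rw [@norm_add_sq 𝕜, @norm_sub_sq 𝕜]; ring
  rw [hpar, add_mul, one_mul]
  linarith

end Coercive

end ContinuousLinearMap

/-- If `A` is bounded on a complex Hilbert space with `Re⟨u, Au⟩ ≥ c‖u‖²`, `c > 0`,
then `1 + A` is boundedly invertible and the Cayley transform `(1-A)(1+A)⁻¹` is a
strict contraction with `‖(1-A)(1+A)⁻¹‖ ≤ (1 + 2c/(1+‖A‖²))^{-1/2} < 1`. -/
theorem cayley_transform_strict_contraction
    {H : Type*} [NormedAddCommGroup H] [InnerProductSpace ℂ H] [CompleteSpace H]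
    (A : H →L[ℂ] H) (c : ℝ) (hc : 0 < c)
    (hA : ∀ u : H, c * ‖u‖ ^ 2 ≤ (inner ℂ u (A u) : ℂ).re) :
    ∃ B : H →L[ℂ] H, (1 + A) ∘L B = 1 ∧ B ∘L (1 + A) = 1 ∧
      ‖(1 - A) ∘L B‖ ≤ (1 + 2 * c / (1 + ‖A‖ ^ 2)) ^ (-(1/2 : ℝ)) ∧
      (1 + 2 * c / (1 + ‖A‖ ^ 2)) ^ (-(1/2 : ℝ)) < 1 := by
  have ht : 1 < 1 + 2 * c / (1 + ‖A‖ ^ 2) := lt_add_of_pos_right 1 (by positivity)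
  set E := (1 + A).equivOfCoercive (by linarith) (ContinuousLinearMap.one_add_coercive hA)
  have hE : (E : H →L[ℂ] H) = 1 + A := ContinuousLinearMap.coe_equivOfCoercive ..
  refine ⟨E.symm, ?_, ?_, ?_, Real.rpow_lt_one_of_one_lt_of_neg ht (by norm_num)⟩
  · rw [← hE]; exact E.coe_comp_coe_symm
  · rw [← hE]; exact E.coe_symm_comp_coe
  · refine ContinuousLinearMap.opNorm_le_rpow_neg_half_of_mul_sq_le _ (zero_lt_one.trans ht)
      fun v => ?_
    have hv : (1 + A) (E.symm v) = v := by rw [← hE]; exact E.apply_symm_apply v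
    calc _ ≤ ‖(1 + A) (E.symm v)‖ ^ 2 := by
          simpa using ContinuousLinearMap.cayley_norm_sq_le hc.le hA (E.symm v)
      _ = ‖v‖ ^ 2 := by rw [hv]
end

section
/- Let (K, D(K)) be maximal accretive on a complex Hilbert space H and let Λ ≥ 1 be self-adjoint with D(Λ) dense in D(K) and ‖Ku‖ ≤ ‖Λu‖ for u ∈ D(Λ). Let r ∈ (0,1] and assume C₀ := sup_{t>0} t^{2/r − 1} ‖Λ^r e^{−t(1+K)}‖ < ∞ (meaning e^{−t(1+K)} maps H into D(Λ^r) with this uniform bound). Then for every θ ∈ (0, r/(2−r)) there is C_θ > 0 such that ‖Λ^{θr} u‖ ≤ C_θ ( ‖(K − iλ)u‖ + ‖u‖ ) for all u ∈ D(K) and all λ ∈ ℝ. -/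
/-!
With `c = -2 + iλ` and `f = K u - c u`, the resolvent is a Laplace transform:
`u = ∫₀^∞ e^{ct} T t f dt`. For `t > 0` the smoothing hypothesis gives `w_t` with
`S^r w_t = e^{-t} T t f` and `‖w_t‖ ≤ C₀ t^{1-2/r} ‖f‖`. The interpolation inequality
`‖S^{(1-θ)r} w‖ ≤ ‖S^r w‖^{1-θ} ‖w‖^θ` makes `W_t = S^{(1-θ)r} w_t` a preimage of
`e^{-t} T t f` under `S^{θr}` with `‖W_t‖ ≤ C₀^θ t^{-θ(2/r-1)} ‖f‖`, continuous in `t`, so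
`∫₀^∞ e^{(c+1)t} W_t dt` is a preimage of `u` under `S^{θr}`. It converges exactly when
`θ(2/r-1) < 1`, i.e. `θ < r/(2-r)`, with norm at most `C₀^θ Γ(1-θ(2/r-1)) ‖f‖`.
The interpolation inequality comes from the operator Young inequality
`S^{2pc} ≤ p l^{p-1} S^{2c} + (1-p) l^p`, optimised over `l > 0`.
-/

open MeasureTheory Set Filter Topology

theorem rpow_le_tangent_line {p l x : ℝ} (hp : 0 ≤ p) (hp1 : p ≤ 1) (hl : 0 < l) (hx : 0 ≤ x) :
    x ^ p ≤ p * l ^ (p - 1) * x + (1 - p) * l ^ p := by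
  have amgm := Real.geom_mean_le_arith_mean2_weighted hp (sub_nonneg.2 hp1) hx hl.le
    (add_sub_cancel p 1)
  have hl1 : l ^ (p - 1) * l ^ (1 - p) = 1 := by
    rw [← Real.rpow_add hl, sub_add_sub_cancel', sub_self, Real.rpow_zero]
  have hlp : l ^ (p - 1) * l = l ^ p := by
    rw [Real.rpow_sub_one hl.ne', div_mul_cancel₀ _ hl.ne']
  calc x ^ p = l ^ (p - 1) * (x ^ p * l ^ (1 - p)) := by
        rw [mul_left_comm, hl1, mul_one]
    _ ≤ l ^ (p - 1) * (p * x + (1 - p) * l) := by gcongr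
    _ = p * l ^ (p - 1) * x + (1 - p) * l ^ p := by rw [← hlp]; ring

theorem le_rpow_mul_rpow_of_forall_le_tangent {p N X M : ℝ} (hp : 0 < p) (hX : 0 ≤ X)
    (hM : 0 < M) (h : ∀ l : ℝ, 0 < l → N ≤ p * l ^ (p - 1) * X + (1 - p) * l ^ p * M) :
    N ≤ X ^ p * M ^ (1 - p) := by
  rcases hX.eq_or_lt with rfl | hX
  · have hlim : Tendsto (fun l : ℝ => (1 - p) * l ^ p * M) (𝓝[>] 0) (𝓝 0) := by
      have := ((Real.continuousAt_rpow_const 0 p (Or.inr hp.le)).tendsto.mono_left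
        (nhdsWithin_le_nhds (s := Ioi 0))).const_mul (1 - p) |>.mul_const M
      simpa [Real.zero_rpow hp.ne'] using this
    rw [Real.zero_rpow hp.ne', zero_mul]
    exact ge_of_tendsto hlim (eventually_mem_nhdsWithin.mono fun l hl => by simpa using h l hl)
  · have hXM : 0 < X / M := div_pos hX hM
    calc N ≤ p * (X / M) ^ (p - 1) * X + (1 - p) * (X / M) ^ p * M := h _ hXM
      _ = X ^ p * M ^ (1 - p) := by
        rw [Real.rpow_sub_one hXM.ne', Real.div_rpow hX.le hM.le, Real.rpow_sub hM,
          Real.rpow_one]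
        field_simp
        ring

section Interpolation

variable {H : Type*} [NormedAddCommGroup H] [InnerProductSpace ℂ H] [CompleteSpace H]
  {S : H →L[ℂ] H}

theorem ContinuousLinearMap.IsPositive.spectrum_nonneg (hS : S.IsPositive) :
    ∀ x ∈ spectrum ℝ S, 0 ≤ x :=
  fun _ hx => spectrum_nonneg_of_nonneg ((S.nonneg_iff_isPositive).2 hS) hx

theorem ContinuousLinearMap.IsPositive.cfc_rpow_mul_cfc_rpow (hS : S.IsPositive) {a b : ℝ}
    (ha : 0 < a) (hb : 0 < b) :
    cfc (fun x : ℝ => x ^ a) S * cfc (fun x : ℝ => x ^ b) S =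
      cfc (fun x : ℝ => x ^ (a + b)) S := by
  rw [← cfc_mul _ _ S (Real.continuous_rpow_const ha.le).continuousOn
    (Real.continuous_rpow_const hb.le).continuousOn]
  exact cfc_congr fun x hx =>
    (Real.rpow_add' (hS.spectrum_nonneg x hx) (add_pos ha hb).ne').symm

omit [CompleteSpace H] in
theorem ContinuousLinearMap.re_inner_le_of_le {O₁ O₂ : H →L[ℂ] H} (h : O₁ ≤ O₂) (y : H) :
    (inner ℂ y (O₁ y)).re ≤ (inner ℂ y (O₂ y)).re := by
  have := ((ContinuousLinearMap.le_def O₁ O₂).1 h).re_inner_nonneg_right y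
  simpa [inner_sub_right] using this

theorem ContinuousLinearMap.IsPositive.norm_cfc_rpow_sq (hS : S.IsPositive) {a : ℝ} (ha : 0 < a)
    (z : H) :
    ‖cfc (fun x : ℝ => x ^ a) S z‖ ^ 2 = (inner ℂ z (cfc (fun x : ℝ => x ^ (a + a)) S z)).re := by
  set C := cfc (fun x : ℝ => x ^ a) S
  have hsymm : ∀ x y : H, inner ℂ (C x) y = inner ℂ x (C y) :=
    ContinuousLinearMap.isSelfAdjoint_iff_isSymmetric.1 (cfc_predicate _ S)
  rw [← hS.cfc_rpow_mul_cfc_rpow ha ha, mul_apply_eq_comp, ← hsymm, inner_self_eq_norm_sq_to_K]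
  norm_cast

theorem ContinuousLinearMap.IsPositive.re_inner_cfc_rpow_mul_le (hS : S.IsPositive) {p b l : ℝ}
    (hp : 0 ≤ p) (hp1 : p ≤ 1) (hb : 0 ≤ b) (hl : 0 < l) (y : H) :
    (inner ℂ y (cfc (fun x : ℝ => x ^ (p * b)) S y)).re ≤
      p * l ^ (p - 1) * (inner ℂ y (cfc (fun x : ℝ => x ^ b) S y)).re +
        (1 - p) * l ^ p * ‖y‖ ^ 2 := by
  have hop : cfc (fun x : ℝ => x ^ (p * b)) S ≤ (p * l ^ (p - 1)) • cfc (fun x : ℝ => x ^ b) S +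
      algebraMap ℝ (H →L[ℂ] H) ((1 - p) * l ^ p) := by
    rw [← cfc_const_mul _ _ S (Real.continuous_rpow_const hb).continuousOn,
      ← cfc_add_const _ (fun x : ℝ => p * l ^ (p - 1) * x ^ b) S
        (continuousOn_const.mul (Real.continuous_rpow_const hb).continuousOn) hS.isSelfAdjoint]
    refine cfc_mono (fun x hx => ?_) (Real.continuous_rpow_const (mul_nonneg hp hb)).continuousOn
    rw [mul_comm p b, Real.rpow_mul (hS.spectrum_nonneg x hx)]
    exact rpow_le_tangent_line hp hp1 hl (Real.rpow_nonneg (hS.spectrum_nonneg x hx) b)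
  calc _ ≤ _ := re_inner_le_of_le hop y
    _ = _ := by
      simp [Algebra.algebraMap_eq_smul_one, ← Complex.ofReal_pow, inner_self_eq_norm_sq_to_K]

theorem ContinuousLinearMap.IsPositive.norm_cfc_rpow_mul_le (hS : S.IsPositive) {c p : ℝ}
    (hc : 0 < c) (hp : 0 < p) (hp1 : p < 1) (y : H) :
    ‖cfc (fun x : ℝ => x ^ (p * c)) S y‖ ≤ ‖cfc (fun x : ℝ => x ^ c) S y‖ ^ p * ‖y‖ ^ (1 - p) := by
  rcases eq_or_ne y 0 with rfl | hy
  · simp [Real.zero_rpow (sub_pos.2 hp1).ne']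
  have hsq : ‖cfc (fun x : ℝ => x ^ (p * c)) S y‖ ^ 2 ≤
      (‖cfc (fun x : ℝ => x ^ c) S y‖ ^ 2) ^ p * (‖y‖ ^ 2) ^ (1 - p) := by
    refine le_rpow_mul_rpow_of_forall_le_tangent hp (by positivity) (by positivity) fun l hl => ?_
    rw [hS.norm_cfc_rpow_sq (mul_pos hp hc), hS.norm_cfc_rpow_sq hc, ← mul_add]
    exact hS.re_inner_cfc_rpow_mul_le hp.le hp1.le (by linarith) hl y
  rwa [← Real.rpow_pow_comm (norm_nonneg _), ← Real.rpow_pow_comm (norm_nonneg _), ← mul_pow,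
    pow_le_pow_iff_left₀ (norm_nonneg _) (by positivity) two_ne_zero] at hsq

theorem ContinuousLinearMap.IsPositive.continuousOn_cfc_rpow_mul_apply (hS : S.IsPositive)
    {X : Type*} [TopologicalSpace X] {U : Set X} {c p : ℝ} (hc : 0 < c) (hp : 0 < p)
    (hp1 : p < 1) {v w : X → H} {g : X → ℝ} (hv : ContinuousOn v U)
    (hwv : ∀ t ∈ U, cfc (fun x : ℝ => x ^ c) S (w t) = v t)
    (hg : ContinuousOn g U) (hwg : ∀ t ∈ U, ‖w t‖ ≤ g t) :
    ContinuousOn (fun t => cfc (fun x : ℝ => x ^ (p * c)) S (w t)) U := by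
  intro t₀ ht₀
  set M := 2 * g t₀ + 1
  have hbound : ∀ᶠ s in 𝓝[U] t₀, ‖cfc (fun x : ℝ => x ^ (p * c)) S (w s) -
      cfc (fun x : ℝ => x ^ (p * c)) S (w t₀)‖ ≤ ‖v s - v t₀‖ ^ p * M ^ (1 - p) := by
    filter_upwards [self_mem_nhdsWithin, (hg t₀ ht₀).eventually (gt_mem_nhds (lt_add_one _))]
      with s hs hgs
    have hw : ‖w s - w t₀‖ ≤ M := by
      linarith [norm_sub_le (w s) (w t₀), hwg s hs, hwg t₀ ht₀]
    rw [← map_sub]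
    refine (hS.norm_cfc_rpow_mul_le hc hp hp1 _).trans ?_
    rw [map_sub, hwv s hs, hwv t₀ ht₀]
    gcongr
  have hlim : Tendsto (fun s => ‖v s - v t₀‖ ^ p * M ^ (1 - p)) (𝓝[U] t₀) (𝓝 0) := by
    have := ((Real.continuousAt_rpow_const 0 p (Or.inr hp.le)).tendsto.comp
      (tendsto_iff_norm_sub_tendsto_zero.1 (hv t₀ ht₀))).mul_const (M ^ (1 - p))
    simpa [Real.zero_rpow hp.ne'] using this
  exact tendsto_iff_norm_sub_tendsto_zero.2
    (squeeze_zero' (Eventually.of_forall fun _ => norm_nonneg _) hbound hlim)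

end Interpolation

section Semigroup

variable {E : Type*} [NormedAddCommGroup E] [NormedSpace ℂ E] {D : Submodule ℂ E}
  {K : D →ₗ[ℂ] E} {T : ℝ → E →L[ℂ] E}

theorem hasDerivAt_semigroup_apply [CompleteSpace E]
    (hTcont : ∀ v : E, ContinuousOn (fun t => T t v) (Ici 0))
    (hTgen : ∀ u : D, ∀ t : ℝ, 0 ≤ t → T t (u : E) - (u : E) = -∫ s in (0:ℝ)..t, T s (K u))
    (u : D) {t : ℝ} (ht : 0 < t) :
    HasDerivAt (fun s => T s (u : E)) (-T t (K u)) t := by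
  have hmem : Ici (0 : ℝ) ∈ 𝓝 t := Ici_mem_nhds ht
  have hint : HasDerivAt (fun b => ∫ s in (0:ℝ)..b, T s (K u)) (T t (K u)) t :=
    intervalIntegral.integral_hasDerivAt_right
      ((hTcont (K u)).mono (uIcc_of_le ht.le ▸ Icc_subset_Ici_self)).intervalIntegrable
      ⟨Ici 0, hmem, (hTcont (K u)).aestronglyMeasurable measurableSet_Ici⟩
      ((hTcont (K u)).continuousAt hmem)
  refine (hint.const_sub (u : E)).congr_of_eventuallyEq ?_
  filter_upwards [hmem] with s hs
  rw [sub_eq_add_neg, ← hTgen u s hs]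
  abel

theorem norm_cexp_smul_semigroup_apply_le (hTcontr : ∀ t : ℝ, 0 ≤ t → ‖T t‖ ≤ 1) (c : ℂ)
    {t : ℝ} (ht : 0 ≤ t) (f : E) :
    ‖Complex.exp (c * t) • T t f‖ ≤ Real.exp (c.re * t) * ‖f‖ := by
  rw [norm_smul, Complex.norm_exp, Complex.re_mul_ofReal]
  gcongr
  exact (T t).le_of_opNorm_le (hTcontr t ht) f |>.trans_eq (one_mul _)

theorem integrableOn_cexp_smul_semigroup_apply (hTcontr : ∀ t : ℝ, 0 ≤ t → ‖T t‖ ≤ 1)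
    (hTcont : ∀ v : E, ContinuousOn (fun t => T t v) (Ici 0)) {c : ℂ} (hc : c.re < 0) (f : E) :
    IntegrableOn (fun t : ℝ => Complex.exp (c * t) • T t f) (Ioi 0) := by
  refine ((integrableOn_exp_mul_Ioi hc 0).mul_const ‖f‖).mono' ?_ ?_
  · exact ((by fun_prop : Continuous fun t : ℝ => Complex.exp (c * t)).continuousOn.smul
      ((hTcont f).mono Ioi_subset_Ici_self)).aestronglyMeasurable measurableSet_Ioi
  · filter_upwards [ae_restrict_mem measurableSet_Ioi] with t ht
    exact norm_cexp_smul_semigroup_apply_le hTcontr c (le_of_lt ht) f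

theorem integral_cexp_smul_semigroup_apply [CompleteSpace E] (hT0 : T 0 = 1)
    (hTcontr : ∀ t : ℝ, 0 ≤ t → ‖T t‖ ≤ 1)
    (hTcont : ∀ v : E, ContinuousOn (fun t => T t v) (Ici 0))
    (hTgen : ∀ u : D, ∀ t : ℝ, 0 ≤ t → T t (u : E) - (u : E) = -∫ s in (0:ℝ)..t, T s (K u))
    (u : D) {c : ℂ} (hc : c.re < 0) :
    ∫ t in Ioi (0 : ℝ), Complex.exp (c * t) • T t (K u - c • (u : E)) = u := by
  have hexp : Continuous fun t : ℝ => Complex.exp (c * t) := by fun_prop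
  have hderiv : ∀ t ∈ Ioi (0 : ℝ), HasDerivAt (fun s : ℝ => Complex.exp (c * s) • T s (u : E))
      (-(Complex.exp (c * t) • T t (K u - c • (u : E)))) t := by
    intro t ht
    have hcexp : HasDerivAt (fun s : ℝ => Complex.exp (c * s)) (c * Complex.exp (c * t)) t := by
      simpa [mul_comm] using ((hasDerivAt_id (t : ℂ)).const_mul c).cexp.comp_ofReal
    refine (hcexp.smul (hasDerivAt_semigroup_apply hTcont hTgen u ht)).congr_deriv ?_
    rw [map_sub, map_smul]
    module
  have hlim : Tendsto (fun t : ℝ => Complex.exp (c * t) • T t (u : E)) atTop (𝓝 0) := by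
    have hexp0 : Tendsto (fun t : ℝ => Real.exp (c.re * t) * ‖(u : E)‖) atTop (𝓝 0) := by
      simpa using (Real.tendsto_exp_atBot.comp
        (tendsto_id.const_mul_atTop_of_neg hc)).mul_const ‖(u : E)‖
    refine squeeze_zero_norm' ?_ hexp0
    filter_upwards [eventually_ge_atTop 0] with t ht
    exact norm_cexp_smul_semigroup_apply_le hTcontr c ht _
  have hFTC := integral_Ioi_of_hasDerivAt_of_tendsto
    ((hexp.continuousOn.smul (hTcont (u : E))).continuousWithinAt self_mem_Ici) hderiv
    (integrableOn_cexp_smul_semigroup_apply hTcontr hTcont hc _).neg hlim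
  rw [integral_neg, zero_sub, neg_inj] at hFTC
  simpa [hT0] using hFTC

end Semigroup

section Smoothing

variable {H : Type*} [NormedAddCommGroup H] [InnerProductSpace ℂ H] [CompleteSpace H]
  {S : H →L[ℂ] H} {T : ℝ → H →L[ℂ] H} {r β θ C : ℝ}

theorem exists_continuousOn_cfc_rpow_eq_of_smoothing (hS : S.IsPositive)
    (hTcontr : ∀ t : ℝ, 0 ≤ t → ‖T t‖ ≤ 1)
    (hTcont : ∀ v : H, ContinuousOn (fun t => T t v) (Ici 0))
    (hr : 0 < r) (hθ : 0 < θ) (hθ1 : θ < 1) (hC : 0 ≤ C)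
    (hsmooth : ∀ t : ℝ, 0 < t → ∀ v : H, ∃ w : H,
      cfc (fun x : ℝ => x ^ r) S w = Real.exp (-t) • T t v ∧ t ^ β * ‖w‖ ≤ C * ‖v‖) (f : H) :
    ∃ W : ℝ → H, ContinuousOn W (Ioi 0) ∧ ∀ t : ℝ, 0 < t →
      cfc (fun x : ℝ => x ^ (θ * r)) S (W t) = Real.exp (-t) • T t f ∧
      ‖W t‖ ≤ C ^ θ * ‖f‖ * t ^ (-(θ * β)) := by
  choose! w hrw hw using hsmooth
  have hwle : ∀ t : ℝ, 0 < t → ‖w t f‖ ≤ C * ‖f‖ * t ^ (-β) := fun t ht => by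
    rw [Real.rpow_neg ht.le, ← div_eq_mul_inv, le_div_iff₀ (by positivity), mul_comm]
    exact hw t ht f
  have hvle : ∀ t : ℝ, 0 ≤ t → ‖Real.exp (-t) • T t f‖ ≤ ‖f‖ := fun t ht => by
    rw [norm_smul, Real.norm_of_nonneg (Real.exp_nonneg _)]
    exact (mul_le_of_le_one_left (norm_nonneg _) (Real.exp_le_one_iff.2 (neg_nonpos.2 ht))).trans
      ((T t).le_of_opNorm_le (hTcontr t ht) f |>.trans_eq (one_mul _))
  refine ⟨fun t => cfc (fun x : ℝ => x ^ ((1 - θ) * r)) S (w t f), ?_, fun t ht => ⟨?_, ?_⟩⟩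
  · refine hS.continuousOn_cfc_rpow_mul_apply hr (sub_pos.2 hθ1) (by linarith)
      ((Real.continuous_exp.comp continuous_neg).continuousOn.smul
        ((hTcont f).mono Ioi_subset_Ici_self)) (fun t ht => hrw t ht f)
      (continuousOn_const.mul (continuousOn_id.rpow_const fun t ht => Or.inl (ne_of_gt ht)))
      hwle
  · rw [← mul_apply_eq_comp, hS.cfc_rpow_mul_cfc_rpow (mul_pos hθ hr)
      (mul_pos (sub_pos.2 hθ1) hr), show θ * r + (1 - θ) * r = r by ring]
    exact hrw t ht f
  · calc _ ≤ ‖Real.exp (-t) • T t f‖ ^ (1 - θ) * ‖w t f‖ ^ (1 - (1 - θ)) := by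
          rw [← hrw t ht f]
          exact hS.norm_cfc_rpow_mul_le hr (sub_pos.2 hθ1) (by linarith) _
      _ ≤ ‖f‖ ^ (1 - θ) * (C * ‖f‖ * t ^ (-β)) ^ θ := by
          rw [sub_sub_cancel]
          gcongr
          exacts [hvle t ht.le, hwle t ht]
      _ = C ^ θ * ‖f‖ * t ^ (-(θ * β)) := by
          have hf : ‖f‖ ^ (1 - θ) * ‖f‖ ^ θ = ‖f‖ := by
            rw [← Real.rpow_add' (norm_nonneg _) (by norm_num), sub_add_cancel, Real.rpow_one]
          rw [Real.mul_rpow (by positivity) (by positivity), Real.mul_rpow hC (norm_nonneg _),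
            ← Real.rpow_mul ht.le, mul_comm (-β), ← neg_mul_eq_mul_neg]
          linear_combination C ^ θ * t ^ (-(θ * β)) * hf

theorem exists_cfc_rpow_eq_integral_of_smoothing (hS : S.IsPositive)
    (hTcontr : ∀ t : ℝ, 0 ≤ t → ‖T t‖ ≤ 1)
    (hTcont : ∀ v : H, ContinuousOn (fun t => T t v) (Ici 0))
    (hr : 0 < r) (hθ : 0 < θ) (hθ1 : θ < 1) (hθβ : θ * β < 1) (hC : 0 ≤ C)
    (hsmooth : ∀ t : ℝ, 0 < t → ∀ v : H, ∃ w : H,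
      cfc (fun x : ℝ => x ^ r) S w = Real.exp (-t) • T t v ∧ t ^ β * ‖w‖ ≤ C * ‖v‖)
    (f : H) {c : ℂ} (hc : c.re ≤ -2) :
    ∃ w : H, cfc (fun x : ℝ => x ^ (θ * r)) S w =
        ∫ t in Ioi (0 : ℝ), Complex.exp (c * t) • T t f ∧
      ‖w‖ ≤ C ^ θ * Real.Gamma (1 - θ * β) * ‖f‖ := by
  obtain ⟨W, hWcont, hW⟩ :=
    exists_continuousOn_cfc_rpow_eq_of_smoothing hS hTcontr hTcont hr hθ hθ1 hC hsmooth f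
  have hΓ := Real.GammaIntegral_convergent (sub_pos.2 hθβ)
  rw [sub_sub_cancel_left] at hΓ
  -- the factor `exp (-t)` is already inside `W t`
  set G : ℝ → H := fun t => Complex.exp ((c + 1) * t) • W t
  have hG : ∀ t ∈ Ioi (0 : ℝ), ‖G t‖ ≤ C ^ θ * ‖f‖ * (Real.exp (-t) * t ^ (-(θ * β))) := by
    intro t ht
    rw [norm_smul, Complex.norm_exp, Complex.re_mul_ofReal, Complex.add_re, Complex.one_re,
      mul_left_comm]
    exact mul_le_mul (Real.exp_le_exp.2 (by nlinarith [mem_Ioi.1 ht])) ((hW t ht).2)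
      (norm_nonneg _) (Real.exp_nonneg _)
  have hGint : IntegrableOn G (Ioi 0) :=
    (hΓ.const_mul _).mono' (((by fun_prop : Continuous fun t : ℝ =>
      Complex.exp ((c + 1) * t)).continuousOn.smul hWcont).aestronglyMeasurable measurableSet_Ioi)
      ((ae_restrict_mem measurableSet_Ioi).mono hG)
  refine ⟨∫ t in Ioi (0 : ℝ), G t, ?_, ?_⟩
  · rw [← (cfc (fun x : ℝ => x ^ (θ * r)) S).integral_comp_comm hGint]
    refine setIntegral_congr_fun measurableSet_Ioi fun t ht => ?_
    rw [map_smul, (hW t ht).1, ← Complex.coe_smul, smul_smul, Complex.ofReal_exp,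
      ← Complex.exp_add]
    congr 2
    push_cast
    ring
  · calc _ ≤ ∫ t in Ioi (0 : ℝ), C ^ θ * ‖f‖ * (Real.exp (-t) * t ^ (-(θ * β))) :=
          norm_integral_le_of_norm_le (hΓ.const_mul _) ((ae_restrict_mem measurableSet_Ioi).mono hG)
      _ = C ^ θ * Real.Gamma (1 - θ * β) * ‖f‖ := by
          rw [integral_const_mul, Real.Gamma_eq_integral (sub_pos.2 hθβ), sub_sub_cancel_left]
          ring

end Smoothing

theorem smoothing_semigroup_implies_cuspidal_general
    {H : Type*} [NormedAddCommGroup H] [InnerProductSpace ℂ H] [CompleteSpace H]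
    (D : Submodule ℂ H) (K : D →ₗ[ℂ] H)
    -- the contraction semigroup generated by `-K`
    (T : ℝ → H →L[ℂ] H)
    (hT0 : T 0 = 1)
    (hTcontr : ∀ t : ℝ, 0 ≤ t → ‖T t‖ ≤ 1)
    (hTcont : ∀ v : H, ContinuousOn (fun t => T t v) (Set.Ici (0 : ℝ)))
    (hTgen : ∀ u : D, ∀ t : ℝ, 0 ≤ t →
      T t (u : H) - (u : H) = -∫ s in (0:ℝ)..t, T s (K u))
    -- `Λ` via its bounded inverse `S`
    (S : H →L[ℂ] H) (hS_pos : S.IsPositive)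
    (r : ℝ) (hr : 0 < r) (hr1 : r ≤ 1)
    -- `C₀ = sup_{t>0} t^{2/r-1} ‖Λ^r e^{-t(1+K)}‖ < ∞`
    (C₀ : ℝ)
    (hC₀ : ∀ t : ℝ, 0 < t → ∀ v : H, ∃ w : H,
      (cfc (fun x : ℝ => x ^ r) S) w = Real.exp (-t) • T t v ∧
      t ^ (2/r - 1) * ‖w‖ ≤ C₀ * ‖v‖) :
    ∀ θ : ℝ, 0 < θ → θ < r / (2 - r) →
      ∃ C_θ > 0, ∀ u : D, ∀ lam : ℝ, ∃ w : H,
        (cfc (fun x : ℝ => x ^ (θ * r)) S) w = (u : H) ∧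
        ‖w‖ ≤ C_θ * (‖K u - (Complex.I * (lam : ℂ)) • (u : H)‖ + ‖(u : H)‖) := by
  intro θ hθ hθr
  have hθ1 : θ < 1 := hθr.trans_le ((div_le_one (by linarith)).2 (by linarith))
  have hθβ : θ * (2 / r - 1) < 1 := by
    rw [show θ * (2 / r - 1) = θ * (2 - r) / r by field_simp, div_lt_one hr]
    exact (lt_div_iff₀ (by linarith)).1 hθr
  have hsmooth : ∀ t : ℝ, 0 < t → ∀ v : H, ∃ w : H, cfc (fun x : ℝ => x ^ r) S w =
      Real.exp (-t) • T t v ∧ t ^ (2 / r - 1) * ‖w‖ ≤ max C₀ 1 * ‖v‖ := fun t ht v =>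
    (hC₀ t ht v).imp fun _ hw => ⟨hw.1, hw.2.trans (by gcongr; exact le_max_left _ _)⟩
  have hΓ := Real.Gamma_pos_of_pos (sub_pos.2 hθβ)
  refine ⟨2 * ((max C₀ 1) ^ θ * Real.Gamma (1 - θ * (2 / r - 1))), by positivity,
    fun u lam => ?_⟩
  set c : ℂ := -2 + Complex.I * lam
  obtain ⟨w, hw, hwf⟩ := exists_cfc_rpow_eq_integral_of_smoothing hS_pos hTcontr hTcont hr hθ
    hθ1 hθβ (by positivity) hsmooth (K u - c • (u : H)) (c := c) (by simp [c])
  refine ⟨w, hw.trans (integral_cexp_smul_semigroup_apply hT0 hTcontr hTcont hTgen u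
    (by simp [c])), hwf.trans ?_⟩
  have hf : ‖K u - c • (u : H)‖ ≤ 2 * (‖K u - (Complex.I * lam) • (u : H)‖ + ‖(u : H)‖) := by
    have hsplit : K u - c • (u : H) = (K u - (Complex.I * lam) • (u : H)) + (2 : ℂ) • (u : H) := by
      simp only [c, add_smul, neg_smul]
      abel
    rw [hsplit]
    refine (norm_add_le _ _).trans ?_
    rw [norm_smul, Complex.norm_ofNat]
    linarith [norm_nonneg (K u - (Complex.I * lam) • (u : H))]
  calc _ ≤ (max C₀ 1) ^ θ * Real.Gamma (1 - θ * (2 / r - 1)) *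
        (2 * (‖K u - (Complex.I * lam) • (u : H)‖ + ‖(u : H)‖)) := by gcongr
    _ = _ := by ring

/-- From uniform smoothing bounds `sup_{t>0} t^{2/r-1} ‖Λ^r e^{-t(1+K)}‖ ≤ C₀` for the
contraction semigroup `(e^{-tK})_{t≥0}` generated by the maximal accretive operator `K`,
one deduces the subelliptic estimates `‖Λ^{θr} u‖ ≤ C_θ (‖(K-iλ)u‖ + ‖u‖)` on `D(K)`,
for every `θ ∈ (0, r/(2-r))`.
The positive self-adjoint operator `Λ ≥ 1` (with `D(Λ)` dense in `D(K)` and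
`‖Ku‖ ≤ ‖Λu‖` on `D(Λ)`) is encoded through its bounded inverse `S = Λ⁻¹`, a positive
injective self-adjoint contraction; `u ∈ D(Λ^s)` with `Λ^s u = w` means
`cfc (·^s) S w = u`.  The semigroup `(T t)_{t≥0}` is a strongly continuous contraction
semigroup whose generator is `-K` (integrated form `T t u - u = -∫₀ᵗ T s (K u) ds`). -/
theorem smoothing_semigroup_implies_cuspidal
    {H : Type*} [NormedAddCommGroup H] [InnerProductSpace ℂ H] [CompleteSpace H]
    (D : Submodule ℂ H) (hDdense : Dense (D : Set H)) (K : D →ₗ[ℂ] H)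
    (haccr : ∀ u : D, 0 ≤ (inner ℂ (u : H) (K u) : ℂ).re)
    (hmax : Function.Bijective fun u : D => (u : H) + K u)
    -- the contraction semigroup generated by `-K`
    (T : ℝ → H →L[ℂ] H)
    (hT0 : T 0 = 1)
    (hTsg : ∀ s t : ℝ, 0 ≤ s → 0 ≤ t → T (s + t) = T s ∘L T t)
    (hTcontr : ∀ t : ℝ, 0 ≤ t → ‖T t‖ ≤ 1)
    (hTcont : ∀ v : H, ContinuousOn (fun t => T t v) (Set.Ici (0 : ℝ)))
    (hTgen : ∀ u : D, ∀ t : ℝ, 0 ≤ t →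
      T t (u : H) - (u : H) = -∫ s in (0:ℝ)..t, T s (K u))
    -- `Λ` via its bounded inverse `S`
    (S : H →L[ℂ] H) (hS_pos : S.IsPositive) (hS_norm : ‖S‖ ≤ 1)
    (hS_inj : Function.Injective S) (hSD : ∀ v : H, S v ∈ D)
    (hΛdense : ∀ u : D, ∀ ε : ℝ, 0 < ε → ∃ v : H,
      ‖(u : H) - S v‖ + ‖K u - K ⟨S v, hSD v⟩‖ < ε)
    (hKΛ : ∀ v : H, ‖K ⟨S v, hSD v⟩‖ ≤ ‖v‖)
    (r : ℝ) (hr : 0 < r) (hr1 : r ≤ 1)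
    -- `C₀ = sup_{t>0} t^{2/r-1} ‖Λ^r e^{-t(1+K)}‖ < ∞`
    (C₀ : ℝ)
    (hC₀ : ∀ t : ℝ, 0 < t → ∀ v : H, ∃ w : H,
      (cfc (fun x : ℝ => x ^ r) S) w = Real.exp (-t) • T t v ∧
      t ^ (2/r - 1) * ‖w‖ ≤ C₀ * ‖v‖) :
    ∀ θ : ℝ, 0 < θ → θ < r / (2 - r) →
      ∃ C_θ > 0, ∀ u : D, ∀ lam : ℝ, ∃ w : H,
        (cfc (fun x : ℝ => x ^ (θ * r)) S) w = (u : H) ∧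
        ‖w‖ ≤ C_θ * (‖K u - (Complex.I * (lam : ℂ)) • (u : H)‖ + ‖(u : H)‖) :=
  smoothing_semigroup_implies_cuspidal_general D K T hT0 hTcontr hTcont hTgen S hS_pos r hr hr1 C₀
    hC₀
end

section
/- Let H be a complex Hilbert space, P a bounded operator on H, and (χ_ℓ)_{ℓ∈L} a finite family of bounded self-adjoint operators with ∑_{ℓ∈L} χ_ℓ² = 1 (identity operator). Then for every u ∈ H: ‖Pu‖² − ∑_{ℓ∈L} ‖P χ_ℓ u‖² = − ∑_{ℓ∈L} ‖[χ_ℓ, P]u‖² + ∑_{ℓ∈L} Re⟨Pu, [χ_ℓ, [χ_ℓ, P]] u⟩. -/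
/-!
Writing `P χ u = χ P u - ⁅χ, P⁆ u` and moving one `χ` across the inner product gives
`‖χ P u‖² - ‖P χ u‖² = 2 Re⟪P u, χ ⁅χ, P⁆ u⟫ - ‖⁅χ, P⁆ u‖²` for each self-adjoint `χ`.
Summing over the partition, `∑ ‖χ_ℓ P u‖² = ‖P u‖²`, and
`2 χ ⁅χ, P⁆ = ⁅χ², P⁆ + ⁅χ, ⁅χ, P⁆⁆`, where the terms `⁅χ_ℓ², P⁆` add up to `⁅1, P⁆ = 0`.
-/

open Finset RCLike
open scoped InnerProductSpace

section Ring

variable {A : Type*} [Ring A]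

theorem two_mul_mul_lie (x p : A) : 2 * (x * ⁅x, p⁆) = ⁅x * x, p⁆ + ⁅x, ⁅x, p⁆⁆ := by
  simp only [Ring.lie_def]
  noncomm_ring

theorem sum_two_mul_mul_lie_eq_sum_lie_lie {ι : Type*} (s : Finset ι) (x : ι → A)
    (hsum : ∑ i ∈ s, x i * x i = 1) (p : A) :
    ∑ i ∈ s, 2 * (x i * ⁅x i, p⁆) = ∑ i ∈ s, ⁅x i, ⁅x i, p⁆⁆ := by
  have hlie : ∑ i ∈ s, ⁅x i * x i, p⁆ = ⁅∑ i ∈ s, x i * x i, p⁆ := by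
    simp only [Ring.lie_def, sum_sub_distrib, sum_mul, mul_sum]
  rw [sum_congr rfl fun i _ => two_mul_mul_lie (x i) p, sum_add_distrib, hlie, hsum,
    (Commute.one_left p).lie_eq, zero_add]

end Ring

section InnerProduct

variable {𝕜 E : Type*} [RCLike 𝕜] [NormedAddCommGroup E] [InnerProductSpace 𝕜 E]

theorem sum_norm_sq_apply_of_sum_mul_self_eq_one {ι : Type*} (s : Finset ι) (χ : ι → E →L[𝕜] E)
    (hχ : ∀ i ∈ s, (χ i : E →ₗ[𝕜] E).IsSymmetric) (hsum : ∑ i ∈ s, χ i * χ i = 1) (v : E) :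
    ∑ i ∈ s, ‖χ i v‖ ^ 2 = ‖v‖ ^ 2 := by
  have h : ∀ i ∈ s, ‖χ i v‖ ^ 2 = re ⟪v, (χ i * χ i) v⟫_𝕜 := fun i hi => by
    have hadj : ⟪χ i v, χ i v⟫_𝕜 = ⟪v, (χ i * χ i) v⟫_𝕜 := hχ i hi _ _
    rw [← hadj, inner_self_eq_norm_sq]
  rw [sum_congr rfl h, ← map_sum, ← inner_sum, ← _root_.sum_apply, hsum, one_apply_eq_self,
    inner_self_eq_norm_sq]

theorem norm_sq_apply_apply_sub_norm_sq_apply_apply_swap {χ : E →L[𝕜] E}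
    (hχ : (χ : E →ₗ[𝕜] E).IsSymmetric) (P : E →L[𝕜] E) (u : E) :
    ‖χ (P u)‖ ^ 2 - ‖P (χ u)‖ ^ 2 = re ⟪P u, (2 * (χ * ⁅χ, P⁆)) u⟫_𝕜 - ‖⁅χ, P⁆ u‖ ^ 2 := by
  have hswap : P (χ u) = χ (P u) - ⁅χ, P⁆ u := by
    rw [Ring.lie_def, sub_apply, mul_apply_eq_comp, mul_apply_eq_comp, sub_sub_cancel]
  have hadj : ⟪χ (P u), ⁅χ, P⁆ u⟫_𝕜 = ⟪P u, (χ * ⁅χ, P⁆) u⟫_𝕜 := hχ _ _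
  rw [hswap, @norm_sub_sq 𝕜, hadj, two_mul (χ * ⁅χ, P⁆), add_apply, inner_add_right, map_add]
  ring

end InnerProduct

/-- Exact localization of squared norms with a partition of unity of self-adjoint
operators `∑ χ_ℓ² = 1` on a complex Hilbert space: for every bounded `P` and `u`,
`‖Pu‖² - ∑ ‖P(χ_ℓ u)‖² = -∑ ‖[χ_ℓ,P]u‖² + ∑ Re⟨Pu, [χ_ℓ,[χ_ℓ,P]]u⟩`. -/
theorem partition_of_unity_norm_localization
    {H : Type*} [NormedAddCommGroup H] [InnerProductSpace ℂ H] [CompleteSpace H]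
    {L : Type*} (s : Finset L) (χ : L → H →L[ℂ] H)
    (hsa : ∀ ℓ ∈ s, IsSelfAdjoint (χ ℓ))
    (hsum : ∑ ℓ ∈ s, χ ℓ ∘L χ ℓ = 1)
    (P : H →L[ℂ] H) (u : H) :
    ‖P u‖ ^ 2 - ∑ ℓ ∈ s, ‖P (χ ℓ u)‖ ^ 2
      = -∑ ℓ ∈ s, ‖(χ ℓ ∘L P - P ∘L χ ℓ) u‖ ^ 2
        + ∑ ℓ ∈ s, (inner ℂ (P u)
            ((χ ℓ ∘L (χ ℓ ∘L P - P ∘L χ ℓ) - (χ ℓ ∘L P - P ∘L χ ℓ) ∘L χ ℓ) u) : ℂ).re := by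
  simp only [← ContinuousLinearMap.mul_def, ← Ring.lie_def] at hsum ⊢
  have hsym : ∀ ℓ ∈ s, (χ ℓ : H →ₗ[ℂ] H).IsSymmetric := fun ℓ hℓ => (hsa ℓ hℓ).isSymmetric
  calc ‖P u‖ ^ 2 - ∑ ℓ ∈ s, ‖P (χ ℓ u)‖ ^ 2
      = ∑ ℓ ∈ s, (‖χ ℓ (P u)‖ ^ 2 - ‖P (χ ℓ u)‖ ^ 2) := by
        rw [sum_sub_distrib, sum_norm_sq_apply_of_sum_mul_self_eq_one s χ hsym hsum]
    _ = ∑ ℓ ∈ s, (re ⟪P u, (2 * (χ ℓ * ⁅χ ℓ, P⁆)) u⟫_ℂ - ‖⁅χ ℓ, P⁆ u‖ ^ 2) :=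
        sum_congr rfl fun ℓ hℓ =>
          norm_sq_apply_apply_sub_norm_sq_apply_apply_swap (hsym ℓ hℓ) P u
    _ = re ⟪P u, (∑ ℓ ∈ s, ⁅χ ℓ, ⁅χ ℓ, P⁆⁆) u⟫_ℂ - ∑ ℓ ∈ s, ‖⁅χ ℓ, P⁆ u‖ ^ 2 := by
        rw [← sum_two_mul_mul_lie_eq_sum_lie_lie s χ hsum, sum_sub_distrib, _root_.sum_apply,
          inner_sum, map_sum]
    _ = _ := by
        rw [_root_.sum_apply, inner_sum, map_sum]
        simp only [RCLike.re_to_complex]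
        ring
end
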